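/- Let M be a matroid on a finite linearly ordered set E with |E| > 1. Then the number of bases of M with internal activity 1 and external activity 0 equals the number of bases with internal activity 0 and external activity 1. Moreover, an explicit bijection is given by B ↦ (B \ {p}) ∪ {p'}, where p = min(E) and p' = min(E \ {p}): B is a uniactive internal basis if and only if (B \ {p}) ∪ {p'} is a uniactive external basis. -/

import Mathlib

namespace AB
open Set

variable {α : Type*}

/-- A circuit of a matroid: a minimal dependent set. -/
def Circuit (M : Matroid α) (C : Set α) : Prop :=
  M.Dep C ∧ ∀ D, D ⊂ C → M.Indep D

/-- A cocircuit: a circuit of the dual matroid. -/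
def Cocircuit (M : Matroid α) (C : Set α) : Prop := Circuit M✶ C

/-- `b` is internally active for the basis `B`: `b ∈ B` and `b` is the minimum of the
fundamental cocircuit `C*(B;b)`, the unique cocircuit contained in `(M.E \ B) ∪ {b}`. -/
def IntActive [LinearOrder α] (M : Matroid α) (B : Set α) (b : α) : Prop :=
  b ∈ B ∧ ∃ C, Cocircuit M C ∧ C ⊆ (M.E \ B) ∪ {b} ∧ b ∈ C ∧ ∀ x ∈ C, b ≤ x

/-- `e` is externally active for the basis `B`: `e ∈ M.E \ B` and `e` is the minimum of the
fundamental circuit `C(B;e)`, the unique circuit contained in `B ∪ {e}`. -/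
def ExtActive [LinearOrder α] (M : Matroid α) (B : Set α) (e : α) : Prop :=
  e ∈ M.E \ B ∧ ∃ C, Circuit M C ∧ C ⊆ B ∪ {e} ∧ e ∈ C ∧ ∀ x ∈ C, e ≤ x

/-- `Int(B)`, the set of internally active elements of `B`. -/
def IntSet [LinearOrder α] (M : Matroid α) (B : Set α) : Set α := {b | IntActive M B b}

/-- `Ext(B)`, the set of externally active elements of `B`. -/
def ExtSet [LinearOrder α] (M : Matroid α) (B : Set α) : Set α := {e | ExtActive M B e}

end AB

namespace AB
/-- A uniactive internal basis: internal activity 1 and external activity 0. -/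
def UniactiveInternal {α : Type*} [LinearOrder α] (M : Matroid α) (B : Set α) : Prop :=
  M.IsBase B ∧ (IntSet M B).ncard = 1 ∧ (ExtSet M B).ncard = 0

/-- A uniactive external basis: internal activity 0 and external activity 1. -/
def UniactiveExternal {α : Type*} [LinearOrder α] (M : Matroid α) (B : Set α) : Prop :=
  M.IsBase B ∧ (IntSet M B).ncard = 0 ∧ (ExtSet M B).ncard = 1
end AB


/-!
Let `p < p'` be the two least elements of `E`. The element `p` is internally active in a basis
containing it and externally active in a basis avoiding it, and whether an element `x > p'` is
active depends only on the elements `≥ x` of the basis, so it is unaffected by exchanging `p` and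
`p'`. In a uniactive internal basis `B`, `p'` is not in `B` (it would be internally active), and
since `p'` is not externally active its fundamental circuit passes through `p`; hence
`B - p + p'` is a basis, in which `p'` is not internally active because its fundamental cocircuit
must meet `B`, i.e. contain `p`. The converse direction is the dual one: `B ↦ E \ B` is a
bijection onto the bases of `M✶` exchanging internal and external activity.
-/

namespace AB

open Set Matroid

variable {α : Type*} {M : Matroid α} {B B' C D : Set α}

lemma circuit_iff_isCircuit : Circuit M C ↔ M.IsCircuit C := by
  rw [isCircuit_iff_forall_ssubset]
  rfl

lemma exchange_exchange {a b : α} (ha : a ∈ B) (hb : b ∉ B) :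
    ((B \ {a}) ∪ {b}) \ {b} ∪ {a} = B := by
  rw [union_singleton, union_singleton, insert_sdiff_self_of_notMem (fun h => hb h.1),
    insert_sdiff_singleton, insert_eq_of_mem ha]

section Order

variable [LinearOrder α] {b e p p' : α}

lemma intActive_iff_extActive_dual (hB : B ⊆ M.E) :
    IntActive M B b ↔ ExtActive M✶ (M.E \ B) b := by
  simp only [IntActive, ExtActive, Cocircuit, dual_ground, sdiff_sdiff_cancel_left hB]

lemma intSet_eq_extSet_dual (hB : B ⊆ M.E) : IntSet M B = ExtSet M✶ (M.E \ B) :=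
  ext fun _ => intActive_iff_extActive_dual hB

lemma extSet_eq_intSet_dual (hB : B ⊆ M.E) : ExtSet M B = IntSet M✶ (M.E \ B) := by
  simpa [sdiff_sdiff_cancel_left hB] using
    (intSet_eq_extSet_dual (M := M✶) (B := M.E \ B) sdiff_subset).symm

lemma UniactiveExternal.dual (h : UniactiveExternal M B) : UniactiveInternal M✶ (M.E \ B) := by
  obtain ⟨hB, hInt, hExt⟩ := h
  exact ⟨hB.compl_isBase_dual, by rwa [← extSet_eq_intSet_dual hB.subset_ground],
    by rwa [← intSet_eq_extSet_dual hB.subset_ground]⟩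

lemma extActive_of_isBase (hB : M.IsBase B) (he : e ∈ M.E \ B) (hmin : ∀ x ∈ B, e ≤ x) :
    ExtActive M B e := by
  refine ⟨he, M.fundCircuit e B, circuit_iff_isCircuit.2 (hB.fundCircuit_isCircuit he.1 he.2),
    ?_, M.mem_fundCircuit e B, fun x hx => ?_⟩
  · rw [union_singleton]
    exact M.fundCircuit_subset_insert e B
  · obtain rfl | hxB := M.fundCircuit_subset_insert e B hx
    exacts [le_rfl, hmin x hxB]

lemma intActive_of_isBase (hB : M.IsBase B) (hb : b ∈ B) (hmin : ∀ x ∈ M.E \ B, b ≤ x) :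
    IntActive M B b :=
  (intActive_iff_extActive_dual hB.subset_ground).2 <|
    extActive_of_isBase hB.compl_isBase_dual ⟨hB.subset_ground hb, fun h => h.2 hb⟩ hmin

lemma extActive_of_dep_subset_insert (hB : M.Indep B) (he : e ∈ M.E \ B) (hD : M.Dep D)
    (hDB : D ⊆ insert e B) (hmin : ∀ x ∈ D, e ≤ x) : ExtActive M B e := by
  obtain ⟨C, hCD, hC⟩ := hD.exists_isCircuit_subset
  have heC : e ∈ C := by
    by_contra heC
    exact hC.not_indep
      (hB.subset fun x hx => (hDB (hCD hx)).resolve_left (ne_of_mem_of_not_mem hx heC))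
  exact ⟨he, C, circuit_iff_isCircuit.2 hC, by rw [union_singleton]; exact hCD.trans hDB, heC,
    fun x hx => hmin x (hCD hx)⟩

lemma IntActive.not_dual_indep (h : IntActive M B b) :
    ¬ M✶.Indep (insert b {x ∈ M.E \ B | b ≤ x}) := by
  obtain ⟨-, C, hC, hCB, -, hmin⟩ := h
  refine fun hI => hC.1.not_indep (hI.subset fun x hx => ?_)
  obtain hxB | rfl := hCB hx
  · exact Or.inr ⟨hxB, hmin x hx⟩
  · exact Or.inl rfl

lemma exists_subset_union_of_forall_le_mem_iff {P : Set α → Prop} {S S' : Set α} {x : α}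
    (hS : ∃ C, P C ∧ C ⊆ S ∪ {x} ∧ x ∈ C ∧ ∀ y ∈ C, x ≤ y)
    (h : ∀ y, x ≤ y → (y ∈ S ↔ y ∈ S')) :
    ∃ C, P C ∧ C ⊆ S' ∪ {x} ∧ x ∈ C ∧ ∀ y ∈ C, x ≤ y := by
  obtain ⟨C, hC, hCS, hxC, hmin⟩ := hS
  exact ⟨C, hC, fun y hy => (hCS hy).imp_left (h y (hmin y hy)).1, hxC, hmin⟩

lemma ExtActive.of_forall_le_mem_iff (he : ExtActive M B e)
    (h : ∀ y, e ≤ y → (y ∈ B ↔ y ∈ B')) : ExtActive M B' e :=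
  ⟨⟨he.1.1, (h e le_rfl).not.1 he.1.2⟩, exists_subset_union_of_forall_le_mem_iff he.2 h⟩

lemma IntActive.of_forall_le_mem_iff (hb : IntActive M B b)
    (h : ∀ y, b ≤ y → (y ∈ B ↔ y ∈ B')) : IntActive M B' b :=
  ⟨(h b le_rfl).1 hb.1,
    exists_subset_union_of_forall_le_mem_iff hb.2 fun y hy => and_congr_right' (h y hy).not⟩

lemma lt_of_isLeast_of_isLeast_sdiff {s : Set α} (hp : IsLeast s p)
    (hp' : IsLeast (s \ {p}) p') : p < p' :=
  (hp.2 hp'.1.1).lt_of_ne (Ne.symm hp'.1.2)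

lemma eq_or_eq_or_lt_of_isLeast {s : Set α} (hp : IsLeast s p) (hp' : IsLeast (s \ {p}) p')
    {x : α} (hx : x ∈ s) : x = p ∨ x = p' ∨ p' < x := by
  obtain rfl | hxp := eq_or_ne x p
  · exact .inl rfl
  exact .inr ((hp'.2 ⟨hx, hxp⟩).eq_or_lt.imp Eq.symm id)

lemma mem_insert_sdiff_iff_of_lt {y : α} (hpp' : p < p') (hy : p' < y) :
    y ∈ insert p' (B \ {p}) ↔ y ∈ B := by
  simp [hy.ne', (hpp'.trans hy).ne']

section Least

variable [M.Finite]

lemma extSet_finite : (ExtSet M B).Finite :=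
  M.ground_finite.subset fun _ h => h.1.1

lemma UniactiveInternal.extSet_eq (h : UniactiveInternal M B) : ExtSet M B = ∅ :=
  (ncard_eq_zero extSet_finite).1 h.2.2

lemma UniactiveInternal.least_mem (hp : IsLeast M.E p) (h : UniactiveInternal M B) : p ∈ B := by
  by_contra hpB
  have hp_ext : p ∈ ExtSet M B :=
    extActive_of_isBase h.1 ⟨hp.1, hpB⟩ fun x hx => hp.2 (h.1.subset_ground hx)
  rwa [h.extSet_eq] at hp_ext

lemma UniactiveInternal.intSet_eq (hp : IsLeast M.E p) (h : UniactiveInternal M B) :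
    IntSet M B = {p} := by
  obtain ⟨a, ha⟩ := ncard_eq_one.1 h.2.1
  have hp_int : p ∈ IntSet M B :=
    intActive_of_isBase h.1 (h.least_mem hp) fun x hx => hp.2 hx.1
  rw [ha, mem_singleton_iff] at hp_int
  rw [ha, hp_int]

lemma UniactiveInternal.second_notMem (hp : IsLeast M.E p) (hp' : IsLeast (M.E \ {p}) p')
    (h : UniactiveInternal M B) : p' ∉ B := by
  intro hp'B
  have hp'_int : p' ∈ IntSet M B :=
    intActive_of_isBase h.1 hp'B fun x hx =>
      hp'.2 ⟨hx.1, fun hxp => hx.2 (hxp ▸ h.least_mem hp)⟩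
  rw [h.intSet_eq hp, mem_singleton_iff] at hp'_int
  exact (lt_of_isLeast_of_isLeast_sdiff hp hp').ne' hp'_int

lemma UniactiveInternal.isBase_exchange (hp : IsLeast M.E p) (hp' : IsLeast (M.E \ {p}) p')
    (h : UniactiveInternal M B) : M.IsBase (insert p' (B \ {p})) := by
  have hp'B := h.second_notMem hp hp'
  refine h.1.exchange_isBase_of_indep hp'B (by_contra fun hdep => ?_)
  have hp'_ext : p' ∈ ExtSet M B :=
    extActive_of_dep_subset_insert h.1.indep ⟨hp'.1.1, hp'B⟩
      ⟨hdep, insert_subset hp'.1.1 (sdiff_subset.trans h.1.subset_ground)⟩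
      (insert_subset_insert sdiff_subset)
      (by rintro x (rfl | ⟨hxB, hxp⟩); exacts [le_rfl, hp'.2 ⟨h.1.subset_ground hxB, hxp⟩])
  rwa [h.extSet_eq] at hp'_ext

theorem UniactiveInternal.exchange (hp : IsLeast M.E p) (hp' : IsLeast (M.E \ {p}) p')
    (h : UniactiveInternal M B) :
    p ∈ B ∧ p' ∉ B ∧ UniactiveExternal M ((B \ {p}) ∪ {p'}) := by
  have hpp' := lt_of_isLeast_of_isLeast_sdiff hp hp'
  have hp'B := h.second_notMem hp hp'
  have hB' := h.isBase_exchange hp hp'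
  have hpB' : p ∉ insert p' (B \ {p}) := by simp [hpp'.ne]
  rw [union_singleton]
  refine ⟨h.least_mem hp, hp'B, hB', ?_, ?_⟩
  · rw [show IntSet M _ = ∅ from eq_empty_of_forall_notMem fun x hx => ?_, ncard_empty]
    rcases eq_or_eq_or_lt_of_isLeast hp hp' (hB'.subset_ground hx.1) with rfl | rfl | hx'
    · exact hpB' hx.1
    · refine hx.not_dual_indep (h.1.compl_isBase_dual.indep.subset ?_)
      rintro y (rfl | ⟨⟨hyE, hyB'⟩, hy⟩)
      · exact ⟨hp'.1.1, hp'B⟩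
      · exact ⟨hyE, fun hyB => hyB' (.inr ⟨hyB, (hpp'.trans_le hy).ne'⟩)⟩
    · have hx_int : x ∈ IntSet M B :=
        hx.of_forall_le_mem_iff fun y hy => mem_insert_sdiff_iff_of_lt hpp' (hx'.trans_le hy)
      rw [h.intSet_eq hp, mem_singleton_iff] at hx_int
      exact (hpp'.trans hx').ne' hx_int
  · rw [show ExtSet M _ = {p} from ?_, ncard_singleton]
    refine eq_singleton_iff_unique_mem.2 ⟨extActive_of_isBase hB' ⟨hp.1, hpB'⟩
      fun x hx => hp.2 (hB'.subset_ground hx), fun x hx => ?_⟩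
    rcases eq_or_eq_or_lt_of_isLeast hp hp' hx.1.1 with rfl | rfl | hx'
    · rfl
    · exact absurd (mem_insert _ _) hx.1.2
    · have hx_ext : x ∈ ExtSet M B :=
        hx.of_forall_le_mem_iff fun y hy => mem_insert_sdiff_iff_of_lt hpp' (hx'.trans_le hy)
      rw [h.extSet_eq] at hx_ext
      exact hx_ext.elim

theorem UniactiveExternal.exchange (hp : IsLeast M.E p) (hp' : IsLeast (M.E \ {p}) p')
    (h : UniactiveExternal M B) :
    p ∉ B ∧ p' ∈ B ∧ UniactiveInternal M ((B \ {p'}) ∪ {p}) := by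
  have hBE := h.1.subset_ground
  obtain ⟨hpB, hp'B, h'⟩ := h.dual.exchange (M := M✶) hp hp'
  refine ⟨fun hpB' => hpB.2 hpB', by_contra fun hp'B' => hp'B ⟨hp'.1.1, hp'B'⟩, ?_⟩
  have hdual := h'.dual
  rw [dual_dual] at hdual
  convert hdual using 1
  ext x
  simp only [dual_ground, mem_union, mem_sdiff, mem_singleton_iff]
  grind [hp.1, hp'.1.2, @hBE x]

end Least

end Order

end AB

theorem stmt_10_general {α : Type*} [LinearOrder α] (M : Matroid α) [M.Finite]
    (p : α) (hp : IsLeast M.E p) (p' : α) (hp' : IsLeast (M.E \ {p}) p') :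
    {B : Set α | AB.UniactiveInternal M B}.ncard
        = {B : Set α | AB.UniactiveExternal M B}.ncard ∧
      Set.BijOn (fun B : Set α => (B \ {p}) ∪ {p'})
        {B : Set α | AB.UniactiveInternal M B}
        {B : Set α | AB.UniactiveExternal M B} := by
  suffices hbij : Set.BijOn (fun B : Set α => (B \ {p}) ∪ {p'})
      {B | AB.UniactiveInternal M B} {B | AB.UniactiveExternal M B} from
    ⟨hbij.ncard_eq, hbij⟩
  refine Set.InvOn.bijOn (f' := fun B => (B \ {p'}) ∪ {p}) ⟨fun B hB => ?_, fun B hB => ?_⟩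
    (fun B hB => (hB.exchange hp hp').2.2) (fun B hB => (hB.exchange hp hp').2.2)
  · obtain ⟨hpB, hp'B, -⟩ := hB.exchange hp hp'
    exact AB.exchange_exchange hpB hp'B
  · obtain ⟨hpB, hp'B, -⟩ := hB.exchange hp hp'
    exact AB.exchange_exchange hp'B hpB

/-- For `|E| > 1`, the number of `(1,0)`-active bases equals the number
of `(0,1)`-active bases; an explicit bijection is `B ↦ (B \ {p}) ∪ {p'}`, where
`p = min E` and `p' = min (E \ {p})`. -/
theorem stmt_10 {α : Type*} [LinearOrder α] (M : Matroid α) [M.Finite]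
    (hcard : 1 < M.E.ncard)
    (p : α) (hp : IsLeast M.E p) (p' : α) (hp' : IsLeast (M.E \ {p}) p') :
    {B : Set α | AB.UniactiveInternal M B}.ncard
        = {B : Set α | AB.UniactiveExternal M B}.ncard ∧
      Set.BijOn (fun B : Set α => (B \ {p}) ∪ {p'})
        {B : Set α | AB.UniactiveInternal M B}
        {B : Set α | AB.UniactiveExternal M B} :=
  stmt_10_general M p hp p' hp'
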